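/- arXiv:2605.30532 — 3 statements merged into one kernel-verified Lean document; each statement's English description precedes it below -/
import Mathlib

section
/- Let Δ_1,…,Δ_d be reals with zero sum, M := max_i Δ_i, λ > 0, Z := ∑_k exp(-λ Δ_k), and A := {i : Δ_i ≥ M - 1}. Then ∑_{i ∈ A} exp(-λ Δ_i)/Z ≤ d · e^λ · exp(-λ · (d/(d-1)) · M). -/
open Finset Real

/-!
Since the `Δ i` sum to zero, the entries other than a maximal one sum to `-M`, so one of them is at
most `-M / (d - 1)`; its term alone gives `Z ≥ exp (λ M / (d - 1))`. Every index of `A` contributes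
at most `exp (λ (1 - M))` to the numerator, and there are at most `d` of them.
-/

lemma exists_le_neg_div_card_sub_one {ι : Type*} [Fintype ι] [DecidableEq ι] {Δ : ι → ℝ}
    (hsum : ∑ i, Δ i = 0) (hcard : 2 ≤ Fintype.card ι) (j₀ : ι) :
    ∃ j, Δ j ≤ -Δ j₀ / (Fintype.card ι - 1) := by
  have hcard_erase : ((univ.erase j₀).card : ℝ) = Fintype.card ι - 1 := by
    rw [card_erase_of_mem (mem_univ j₀), card_univ, Nat.cast_sub (by omega), Nat.cast_one]
  have hpos : (0 : ℝ) < Fintype.card ι - 1 := by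
    have : (2 : ℝ) ≤ Fintype.card ι := by exact_mod_cast hcard
    linarith
  have hsum_erase : ∑ i ∈ univ.erase j₀, Δ i = -Δ j₀ := by
    linarith [sum_erase_add univ Δ (mem_univ j₀)]
  have hne : (univ.erase j₀).Nonempty :=
    card_pos.mp (by rw [card_erase_of_mem (mem_univ j₀), card_univ]; omega)
  obtain ⟨j, -, hj⟩ := exists_le_of_sum_le (f := Δ)
    (g := fun _ => -Δ j₀ / (Fintype.card ι - 1)) hne
    (by rw [hsum_erase, sum_const, nsmul_eq_mul, hcard_erase, mul_div_cancel₀ _ hpos.ne'])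
  exact ⟨j, hj⟩

lemma exp_mul_div_card_sub_one_le_sum_exp {ι : Type*} [Fintype ι] {Δ : ι → ℝ}
    (hsum : ∑ i, Δ i = 0) (hcard : 2 ≤ Fintype.card ι) {lam : ℝ} (hlam : 0 ≤ lam) (j₀ : ι) :
    exp (lam * Δ j₀ / (Fintype.card ι - 1)) ≤ ∑ k, exp (-lam * Δ k) := by
  classical
  obtain ⟨j, hj⟩ := exists_le_neg_div_card_sub_one hsum hcard j₀
  calc exp (lam * Δ j₀ / (Fintype.card ι - 1)) ≤ exp (-lam * Δ j) := by
        have := mul_le_mul_of_nonneg_left hj hlam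
        rw [neg_div, mul_neg] at this
        rw [exp_le_exp, mul_div_assoc]
        linarith
    _ ≤ ∑ k, exp (-lam * Δ k) :=
        single_le_sum (f := fun k => exp (-lam * Δ k)) (fun k _ => (exp_pos _).le) (mem_univ j)

lemma exp_neg_mul_le_of_sub_one_le {lam M x : ℝ} (hlam : 0 ≤ lam) (hx : M - 1 ≤ x) :
    exp (-lam * x) ≤ exp lam * exp (-lam * M) := by
  rw [← exp_add, exp_le_exp]
  nlinarith

theorem stmt_2 (d : ℕ) (hd : 2 ≤ d) (Δ : Fin d → ℝ)
    (hsum : ∑ i, Δ i = 0) (lam : ℝ) (hlam : 0 < lam)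
    (hne : (Finset.univ : Finset (Fin d)).Nonempty)
    (M : ℝ) (hM : M = Finset.univ.sup' hne Δ)
    (Z : ℝ) (hZ : Z = ∑ k, Real.exp (-lam * Δ k))
    (A : Finset (Fin d)) (hA : A = Finset.univ.filter (fun i => M - 1 ≤ Δ i)) :
    ∑ i ∈ A, Real.exp (-lam * Δ i) / Z ≤
      d * Real.exp lam * Real.exp (-lam * (d / (d - 1)) * M) := by
  obtain ⟨j₀, -, hj₀⟩ := exists_mem_eq_sup' hne Δ
  have hZ_ge : exp (lam * M / (d - 1)) ≤ Z := by
    simpa [hZ, hM, hj₀] using exp_mul_div_card_sub_one_le_sum_exp hsum (by simpa) hlam.le j₀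
  have hZ_pos : 0 < Z := (exp_pos _).trans_le hZ_ge
  have hterm : ∀ i ∈ A, exp (-lam * Δ i) / Z ≤ exp lam * exp (-lam * M) / Z := fun i hi =>
    div_le_div_of_nonneg_right
      (exp_neg_mul_le_of_sub_one_le hlam.le (by simpa [hA] using hi)) hZ_pos.le
  have hcardA : (A.card : ℝ) ≤ d := by
    exact_mod_cast (card_le_univ A).trans_eq (Fintype.card_fin d)
  have hd1 : (0 : ℝ) < d - 1 := by
    have : (2 : ℝ) ≤ d := by exact_mod_cast hd
    linarith
  calc ∑ i ∈ A, exp (-lam * Δ i) / Z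
      ≤ A.card • (exp lam * exp (-lam * M) / Z) := sum_le_card_nsmul _ _ _ hterm
    _ ≤ d * (exp lam * exp (-lam * M) / exp (lam * M / (d - 1))) := by
        rw [nsmul_eq_mul]
        gcongr
    _ = d * exp lam * exp (-lam * (d / (d - 1)) * M) := by
        rw [mul_div_assoc, ← exp_sub, mul_assoc]
        congr 3
        field_simp
        ring
end

section
/- Fix ρ ∈ (0,1), s ≥ 1, and let N(s) be the counting process of the birth process with waiting times E_m ~ Exp(ρ^m). Set i_*(s) := ⌊log_{1/ρ} s⌋ + 1 and C_1(ρ) := e^{1/ρ}. Then for every integer k ≥ 0, P(N(s) ≥ i_*(s) + k) ≤ C_1(ρ) ρ^{k(k+1)/2}. -/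
/-!
Chernoff: with `θ = ρ ^ (i_* - 1)`, `P(S_r ≤ s) ≤ e^{θ s} ∏_{m < r} ρ^m / (ρ^m + θ)`, the factors
being the Laplace transforms of the exponential waiting times. The choice of `i_*` makes
`s < ρ^{-i_*}`, i.e. `θ s < 1/ρ`. Of the factors with `r = i_* + k`, the first `i_*` are at most `1`
and the `j`-th one after them is at most `ρ^{i_* + j} / θ = ρ^{j + 1}`, giving `ρ^{k(k+1)/2}`.
-/

open MeasureTheory ProbabilityTheory Real Set

namespace ProbabilityTheory

lemma integral_exp_neg_mul_expMeasure {l c : ℝ} (hl : 0 < l) (hc : -l < c) :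
    ∫ x, exp (-c * x) ∂expMeasure l = l / (l + c) := by
  have hdensity : ∀ x, (exponentialPDF l x).toReal • exp (-c * x)
      = (Ici 0).indicator (fun x => l * exp (-(l + c) * x)) x := by
    intro x
    rw [exponentialPDF_eq]
    by_cases hx : 0 ≤ x
    · rw [if_pos hx, indicator_of_mem (mem_Ici.2 hx), ENNReal.toReal_ofReal (by positivity),
        smul_eq_mul, mul_assoc, ← exp_add]
      ring_nf
    · simp [hx]
  rw [show expMeasure l = volume.withDensity (exponentialPDF l) from rfl,
    integral_withDensity_eq_integral_toReal_smul (f := exponentialPDF l)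
      (measurable_exponentialPDFReal l).ennreal_ofReal (ae_of_all _ fun _ => ENNReal.ofReal_lt_top),
    integral_congr_ae (ae_of_all _ hdensity), integral_indicator measurableSet_Ici,
    integral_Ici_eq_integral_Ioi, integral_const_mul, integral_exp_mul_Ioi (by linarith)]
  field_simp
  simp

lemma map_eq_expMeasure_of_measure_le {Ω : Type*} [MeasurableSpace Ω] {μ : Measure Ω}
    [IsProbabilityMeasure μ] {X : Ω → ℝ} {l : ℝ} (hl : 0 < l) (hX : Measurable X)
    (hcdf : ∀ t, 0 ≤ t → μ {ω | X ω ≤ t} = ENNReal.ofReal (1 - exp (-l * t))) :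
    μ.map X = expMeasure l := by
  have := isProbabilityMeasure_expMeasure hl
  have := Measure.isProbabilityMeasure_map (μ := μ) hX.aemeasurable
  refine Measure.ext_of_Iic _ _ fun t => ?_
  rw [Measure.map_apply hX measurableSet_Iic, ← ofReal_cdf, cdf_expMeasure_eq hl]
  change μ {ω | X ω ≤ t} = _
  split_ifs with ht
  · rw [hcdf t ht, neg_mul]
  · rw [ENNReal.ofReal_zero]
    refine measure_mono_null (t := {ω | X ω ≤ 0}) (fun ω (hω : X ω ≤ t) => ?_) ?_
    · exact hω.trans (by linarith : t ≤ 0)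
    · simpa using hcdf 0 le_rfl


lemma mgf_neg_of_map_eq_expMeasure {Ω : Type*} [MeasurableSpace Ω] {μ : Measure Ω} {X : Ω → ℝ}
    {l c : ℝ} (hl : 0 < l) (hc : -l < c) (hX : AEMeasurable X μ) (hlaw : μ.map X = expMeasure l) :
    mgf X μ (-c) = l / (l + c) := by
  rw [mgf, ← integral_map (f := fun x => exp (-c * x)) hX (by fun_prop), hlaw]
  exact integral_exp_neg_mul_expMeasure hl hc

lemma iIndepFun.measureReal_sum_le_le_exp_mul_prod_mgf {Ω ι : Type*} [MeasurableSpace Ω]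
    {μ : Measure Ω} {X : ι → Ω → ℝ} (h_indep : iIndepFun X μ) (h_meas : ∀ i, Measurable (X i))
    (s : Finset ι) {t : ℝ} (ht : t ≤ 0) (ε : ℝ)
    (h_int : ∀ i ∈ s, Integrable (fun ω => exp (t * X i ω)) μ) :
    μ.real {ω | ∑ i ∈ s, X i ω ≤ ε} ≤ exp (-t * ε) * ∏ i ∈ s, mgf (X i) μ t := by
  have := h_indep.isProbabilityMeasure
  rw [← h_indep.mgf_sum h_meas]
  simpa only [Finset.sum_apply] using
    measure_le_le_exp_mul_mgf ε ht (h_indep.integrable_exp_mul_sum h_meas h_int)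

end ProbabilityTheory

lemma prod_pow_div_pow_add_pow_le {ρ : ℝ} (hρ : 0 < ρ) (n k : ℕ) :
    ∏ m ∈ Finset.range (n + 1 + k), ρ ^ m / (ρ ^ m + ρ ^ n) ≤ ρ ^ (k * (k + 1) / 2) := by
  have hle_one : ∀ m, ρ ^ m / (ρ ^ m + ρ ^ n) ≤ 1 := fun m =>
    div_le_one_of_le₀ (by linarith [pow_pos hρ n]) (by positivity)
  have hshift : ∀ j, ρ ^ (n + 1 + j) / (ρ ^ (n + 1 + j) + ρ ^ n) ≤ ρ ^ (j + 1) := fun j =>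
    calc _ ≤ ρ ^ (n + 1 + j) / ρ ^ n :=
          div_le_div_of_nonneg_left (by positivity) (by positivity)
            (by linarith [pow_pos hρ (n + 1 + j)])
      _ = ρ ^ (j + 1) := by rw [div_eq_iff (by positivity), ← pow_add]; ring_nf
  have htriangle : ∏ j ∈ Finset.range k, ρ ^ (j + 1) = ρ ^ (k * (k + 1) / 2) := by
    have hgauss := Finset.sum_range_id (k + 1)
    rw [Finset.sum_range_succ', add_zero, Nat.add_sub_cancel, mul_comm] at hgauss
    rw [Finset.prod_pow_eq_pow_sum, hgauss]
  rw [Finset.prod_range_add, ← htriangle, ← one_mul (∏ j ∈ Finset.range k, ρ ^ (j + 1))]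
  exact mul_le_mul (Finset.prod_le_one (fun _ _ => by positivity) fun m _ => hle_one m)
    (Finset.prod_le_prod (fun _ _ => by positivity) fun j _ => hshift j) (by positivity) zero_le_one

lemma lt_pow_floor_log_div_log_add_one {b : ℝ} (hb : 1 < b) (s : ℝ) :
    s < b ^ (⌊log s / log b⌋₊ + 1) := by
  rcases le_or_gt s 0 with hs | hs
  · exact hs.trans_lt (by positivity)
  · rw [← log_lt_log_iff hs (by positivity), log_pow, ← div_lt_iff₀ (log_pos hb)]
    exact_mod_cast Nat.lt_floor_add_one _

theorem stmt_10_general {Ω : Type*} [MeasurableSpace Ω] (μ : Measure Ω) [IsProbabilityMeasure μ]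
    (ρ : ℝ) (hρ0 : 0 < ρ) (hρ1 : ρ < 1)
    (E : ℕ → Ω → ℝ)
    (hmeas : ∀ m, Measurable (E m))
    (hindep : ProbabilityTheory.iIndepFun E μ)
    (hcdf : ∀ m, ∀ t : ℝ, 0 ≤ t →
      μ {ω | E m ω ≤ t} = ENNReal.ofReal (1 - Real.exp (-(ρ ^ m) * t)))
    (S : ℕ → Ω → ℝ) (hS : ∀ r ω, S r ω = ∑ m ∈ Finset.range r, E m ω)
    (s : ℝ)
    (istar : ℕ) (histar : istar = ⌊Real.log s / Real.log (1 / ρ)⌋₊ + 1)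
    (k : ℕ) :
    μ {ω | S (istar + k) ω ≤ s} ≤
      ENNReal.ofReal (Real.exp (1 / ρ) * ρ ^ (k * (k + 1) / 2)) := by
  subst histar
  set n := ⌊Real.log s / Real.log (1 / ρ)⌋₊
  have hθ : 0 < ρ ^ n := pow_pos hρ0 n
  have hmgf : ∀ m, mgf (E m) μ (-ρ ^ n) = ρ ^ m / (ρ ^ m + ρ ^ n) := fun m =>
    mgf_neg_of_map_eq_expMeasure (pow_pos hρ0 m) (by linarith [pow_pos hρ0 m])
      (hmeas m).aemeasurable (map_eq_expMeasure_of_measure_le (pow_pos hρ0 m) (hmeas m) (hcdf m))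
  -- a non-integrable function has integral `0`, and the mgf is positive
  have hint : ∀ m, Integrable (fun ω => exp (-ρ ^ n * E m ω)) μ := fun m =>
    .of_integral_ne_zero (by rw [← mgf, hmgf]; positivity)
  have hchernoff := hindep.measureReal_sum_le_le_exp_mul_prod_mgf hmeas
    (Finset.range (n + 1 + k)) (neg_nonpos.2 hθ.le) s fun m _ => hint m
  have hθs : ρ ^ n * s ≤ 1 / ρ := by
    have hs := lt_pow_floor_log_div_log_add_one (one_lt_one_div hρ0 hρ1) s
    have : ρ ^ n * (1 / ρ) ^ (n + 1) = 1 / ρ := by rw [pow_succ, one_div_pow]; field_simp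
    nlinarith
  simp only [hS, hmgf, neg_neg] at hchernoff ⊢
  rw [← ofReal_measureReal]
  exact ENNReal.ofReal_le_ofReal <| hchernoff.trans <| mul_le_mul (exp_le_exp.2 hθs)
    (prod_pow_div_pow_add_pow_le hρ0 n k) (by positivity) (by positivity)

theorem stmt_10 {Ω : Type*} [MeasurableSpace Ω] (μ : Measure Ω) [IsProbabilityMeasure μ]
    (ρ : ℝ) (hρ0 : 0 < ρ) (hρ1 : ρ < 1)
    (E : ℕ → Ω → ℝ)
    (hmeas : ∀ m, Measurable (E m))
    (hindep : ProbabilityTheory.iIndepFun E μ)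
    (hcdf : ∀ m, ∀ t : ℝ, 0 ≤ t →
      μ {ω | E m ω ≤ t} = ENNReal.ofReal (1 - Real.exp (-(ρ ^ m) * t)))
    (S : ℕ → Ω → ℝ) (hS : ∀ r ω, S r ω = ∑ m ∈ Finset.range r, E m ω)
    (s : ℝ) (hs : 1 ≤ s)
    (istar : ℕ) (histar : istar = ⌊Real.log s / Real.log (1 / ρ)⌋₊ + 1)
    (k : ℕ) :
    μ {ω | S (istar + k) ω ≤ s} ≤
      ENNReal.ofReal (Real.exp (1 / ρ) * ρ ^ (k * (k + 1) / 2)) :=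
  stmt_10_general μ ρ hρ0 hρ1 E hmeas hindep hcdf S hS s istar histar k
end

section
/- With the notation of the birth process (ρ ∈ (0,1), E_m ~ Exp(ρ^m) independent, N(s) the counting process, i_*(s) := ⌊log_{1/ρ}s⌋ + 1, C_2(ρ) := ∏_{m=0}^∞ (1 - ρ^m/2)^{-1}): for every integer k with 1 ≤ k ≤ i_*(s) - 1, P(N(s) ≤ i_*(s) - k) ≤ C_2(ρ) exp(-ρ^{-k+1}/2). -/
/-!
Since `E m` is exponential with rate `ρ ^ m`, its moment generating function at `θ < ρ ^ m` is
`ρ ^ m / (ρ ^ m - θ)`. For `r = i_* - k + 1` take `θ = ρ ^ (r - 1) / 2`; the Chernoff bound for the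
independent sum `S r` gives `exp (-θ s) ∏_{m < r} (1 - ρ ^ (r - 1 - m) / 2)⁻¹`, where the product
is a partial product of `C₂`. Finally `ρ ^ (i_* - 1) s ≥ 1` by the choice of `i_*`, so
`θ s ≥ ρ ^ (1 - k) / 2`.
-/

open MeasureTheory Real Set Filter
open scoped ENNReal

namespace ProbabilityTheory

lemma exponentialPDFReal_mul_exp_mul (r t : ℝ) :
    (fun x => exponentialPDFReal r x * exp (t * x))
      = (Ici 0).indicator fun x => r * exp ((t - r) * x) := by
  funext x
  by_cases hx : 0 ≤ x
  · simp only [exponentialPDFReal, gammaPDFReal, indicator_of_mem (mem_Ici.mpr hx), if_pos hx,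
      rpow_one, Gamma_one, div_one, sub_self, rpow_zero, mul_one, mul_assoc, ← exp_add]
    ring_nf
  · simp [exponentialPDFReal, gammaPDFReal, hx]

lemma expMeasure_eq_withDensity_toNNReal (r : ℝ) :
    expMeasure r = volume.withDensity fun x => ((exponentialPDFReal r x).toNNReal : ℝ≥0∞) :=
  rfl

lemma integrable_exp_mul_expMeasure {r t : ℝ} (hr : 0 < r) (ht : t < r) :
    Integrable (fun x => exp (t * x)) (expMeasure r) := by
  rw [expMeasure_eq_withDensity_toNNReal,
    integrable_withDensity_iff_integrable_smul (measurable_exponentialPDFReal r).real_toNNReal]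
  simp only [NNReal.smul_def, Real.coe_toNNReal _ (exponentialPDFReal_nonneg hr _), smul_eq_mul]
  rw [exponentialPDFReal_mul_exp_mul, integrable_indicator_iff measurableSet_Ici,
    integrableOn_Ici_iff_integrableOn_Ioi]
  exact (integrableOn_exp_mul_Ioi (sub_neg.mpr ht) 0).const_mul r

lemma integral_exp_mul_expMeasure {r t : ℝ} (hr : 0 < r) (ht : t < r) :
    ∫ x, exp (t * x) ∂expMeasure r = r / (r - t) := by
  rw [expMeasure_eq_withDensity_toNNReal,
    integral_withDensity_eq_integral_smul (measurable_exponentialPDFReal r).real_toNNReal]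
  simp only [NNReal.smul_def, Real.coe_toNNReal _ (exponentialPDFReal_nonneg hr _), smul_eq_mul]
  rw [exponentialPDFReal_mul_exp_mul, integral_indicator measurableSet_Ici,
    integral_Ici_eq_integral_Ioi, integral_const_mul, integral_exp_mul_Ioi (sub_neg.mpr ht),
    mul_zero, exp_zero, neg_div, ← div_neg, neg_sub, mul_one_div]

variable {Ω : Type*} {mΩ : MeasurableSpace Ω} {P : Measure Ω}

lemma hasLaw_expMeasure_of_cdf {X : Ω → ℝ} (hX : Measurable X) {r : ℝ}
    (hr : 0 < r)
    (hcdf : ∀ t, 0 ≤ t → P {ω | X ω ≤ t} = ENNReal.ofReal (1 - exp (-r * t))) :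
    HasLaw X (expMeasure r) P where
  aemeasurable := hX.aemeasurable
  map_eq := by
    have := isProbabilityMeasure_expMeasure hr
    refine (Measure.ext_of_Iic _ _ fun t => ?_).symm
    rw [Measure.map_apply hX measurableSet_Iic, ← ofReal_cdf, cdf_expMeasure_eq hr, eq_comm]
    split_ifs with ht
    · rw [← neg_mul]; exact hcdf t ht
    · rw [ENNReal.ofReal_zero]
      refine measure_mono_null (t := {ω | X ω ≤ 0})
        (fun ω hω => hω.out.trans (not_le.mp ht).le) ?_
      rw [hcdf 0 le_rfl, mul_zero, exp_zero, sub_self, ENNReal.ofReal_zero]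

lemma HasLaw.integrable_exp_mul_of_expMeasure {X : Ω → ℝ} {r t : ℝ}
    (hX : HasLaw X (expMeasure r) P) (hr : 0 < r) (ht : t < r) :
    Integrable (fun ω => exp (t * X ω)) P := by
  have h := hX.map_eq ▸ integrable_exp_mul_expMeasure hr ht
  exact (integrable_map_measure (by fun_prop) hX.aemeasurable).mp h

lemma HasLaw.mgf_of_expMeasure {X : Ω → ℝ} {r t : ℝ}
    (hX : HasLaw X (expMeasure r) P) (hr : 0 < r) (ht : t < r) :
    mgf X P t = r / (r - t) := by
  rw [mgf, ← integral_exp_mul_expMeasure hr ht]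
  exact hX.integral_comp (f := fun x => exp (t * x)) (by fun_prop)

lemma iIndepFun.measureReal_sum_ge_le_of_hasLaw_expMeasure {ι : Type*} {X : ι → Ω → ℝ}
    (hmeas : ∀ i, Measurable (X i)) (hindep : iIndepFun X P) {I : Finset ι} {r : ι → ℝ}
    (hX : ∀ i ∈ I, HasLaw (X i) (expMeasure (r i)) P) (hr : ∀ i ∈ I, 0 < r i)
    {θ : ℝ} (hθ : 0 ≤ θ) (hθr : ∀ i ∈ I, θ < r i) (s : ℝ) :
    P.real {ω | s ≤ ∑ i ∈ I, X i ω} ≤ exp (-θ * s) * ∏ i ∈ I, r i / (r i - θ) := by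
  have := hindep.isProbabilityMeasure
  have hint := hindep.integrable_exp_mul_sum hmeas fun i hi =>
    (hX i hi).integrable_exp_mul_of_expMeasure (hr i hi) (hθr i hi)
  have hmgf : mgf (∑ i ∈ I, X i) P θ = ∏ i ∈ I, r i / (r i - θ) := by
    rw [hindep.mgf_sum hmeas]
    exact Finset.prod_congr rfl fun i hi => (hX i hi).mgf_of_expMeasure (hr i hi) (hθr i hi)
  simpa only [Finset.sum_apply, hmgf] using measure_ge_le_exp_mul_mgf s hθ hint

end ProbabilityTheory

open Finset ProbabilityTheory

lemma Real.multipliable_inv_one_sub_of_summable {ι : Type*} {f : ι → ℝ} (hf : Summable f)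
    (hf1 : ∀ i, f i < 1) : Multipliable fun i => (1 - f i)⁻¹ := by
  refine Real.multipliable_of_summable_log (fun i => inv_pos.mpr (sub_pos.mpr (hf1 i))) ?_
  simpa only [Real.log_inv, sub_eq_add_neg] using (Real.summable_log_one_add_of_summable hf.neg).neg

lemma Real.prod_le_tprod_of_one_le {ι : Type*} {f : ι → ℝ} (hf : Multipliable f)
    (h1 : ∀ i, 1 ≤ f i) (s : Finset ι) : ∏ i ∈ s, f i ≤ ∏' i, f i :=
  ge_of_tendsto hf.hasProd <| eventually_atTop.2 ⟨s, fun _ hst =>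
    prod_le_prod_of_subset_of_one_le hst (fun i _ => zero_le_one.trans (h1 i)) fun i _ _ => h1 i⟩

lemma prod_range_inv_one_sub_half_pow_le_tprod {ρ : ℝ} (hρ0 : 0 ≤ ρ) (hρ1 : ρ < 1) (n : ℕ) :
    ∏ m ∈ range n, (1 - ρ ^ m / 2)⁻¹ ≤ ∏' m, (1 - ρ ^ m / 2)⁻¹ := by
  have hpow : ∀ m, ρ ^ m / 2 < 1 := fun m => by linarith [pow_le_one₀ (n := m) hρ0 hρ1.le]
  refine Real.prod_le_tprod_of_one_le ?_ (fun m => ?_) _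
  · exact Real.multipliable_inv_one_sub_of_summable
      ((summable_geometric_of_lt_one hρ0 hρ1).div_const 2) hpow
  · exact one_le_inv₀ (sub_pos.mpr (hpow m)) |>.mpr (by linarith [pow_nonneg hρ0 m])

lemma prod_range_succ_div_sub_half_pow {ρ : ℝ} (hρ : ρ ≠ 0) (n : ℕ) :
    ∏ m ∈ range (n + 1), ρ ^ m / (ρ ^ m - ρ ^ n / 2) = ∏ m ∈ range (n + 1), (1 - ρ ^ m / 2)⁻¹ := by
  rw [← prod_range_reflect (fun m => (1 - ρ ^ m / 2)⁻¹)]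
  refine prod_congr rfl fun m hm => ?_
  obtain ⟨j, rfl⟩ := Nat.exists_eq_add_of_le (Nat.lt_succ_iff.mp (mem_range.mp hm))
  rw [show m + j + 1 - 1 - m = j by omega, pow_add,
    show ρ ^ m - ρ ^ m * ρ ^ j / 2 = ρ ^ m * (1 - ρ ^ j / 2) by ring,
    div_mul_cancel_left₀ (pow_ne_zero m hρ)]

lemma one_le_pow_floor_log_div_log_inv_mul {ρ s : ℝ} (hρ0 : 0 < ρ) (hρ1 : ρ < 1) (hs : 1 ≤ s) :
    1 ≤ ρ ^ ⌊log s / log (1 / ρ)⌋₊ * s := by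
  set n := ⌊log s / log (1 / ρ)⌋₊
  have hlog : 0 < log (1 / ρ) := log_pos ((one_lt_div hρ0).mpr hρ1)
  have hn : n * log (1 / ρ) ≤ log s :=
    (le_div_iff₀ hlog).mp (Nat.floor_le (div_nonneg (log_nonneg hs) hlog.le))
  have hpow : (1 / ρ) ^ n ≤ s := (pow_le_iff_le_log (by positivity) (by linarith)).mpr hn
  calc 1 = ρ ^ n * (1 / ρ) ^ n := by rw [← mul_pow, mul_one_div_cancel hρ0.ne', one_pow]
    _ ≤ ρ ^ n * s := by gcongr

lemma rpow_one_sub_le_pow_sub_mul {ρ s : ℝ} (hρ : 0 < ρ) {n k : ℕ} (hn : 1 ≤ n) (hkn : k ≤ n)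
    (h : 1 ≤ ρ ^ (n - 1) * s) : ρ ^ (1 - (k : ℝ)) ≤ ρ ^ (n - k) * s := by
  have hsplit : ρ ^ (n - k) = ρ ^ (n - 1) * ρ ^ (1 - (k : ℝ)) := by
    rw [← rpow_natCast, ← rpow_natCast, ← rpow_add hρ, Nat.cast_sub hkn, Nat.cast_sub hn]
    ring_nf
  rw [hsplit, mul_right_comm]
  exact le_mul_of_one_le_left (by positivity) h

theorem stmt_11_general {Ω : Type*} [MeasurableSpace Ω] (μ : Measure Ω) [IsProbabilityMeasure μ]
    (ρ : ℝ) (hρ0 : 0 < ρ) (hρ1 : ρ < 1)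
    (E : ℕ → Ω → ℝ)
    (hmeas : ∀ m, Measurable (E m))
    (hindep : ProbabilityTheory.iIndepFun E μ)
    (hcdf : ∀ m, ∀ t : ℝ, 0 ≤ t →
      μ {ω | E m ω ≤ t} = ENNReal.ofReal (1 - Real.exp (-(ρ ^ m) * t)))
    (S : ℕ → Ω → ℝ) (hS : ∀ r ω, S r ω = ∑ m ∈ Finset.range r, E m ω)
    (s : ℝ) (hs : 1 ≤ s)
    (istar : ℕ) (histar : istar = ⌊Real.log s / Real.log (1 / ρ)⌋₊ + 1)
    (C₂ : ℝ) (hC₂ : C₂ = ∏' m : ℕ, (1 - ρ ^ m / 2)⁻¹)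
    (k : ℕ) (hk2 : k ≤ istar - 1) :
    μ {ω | s < S (istar - k + 1) ω} ≤
      ENNReal.ofReal (C₂ * Real.exp (-(ρ ^ (1 - (k : ℝ))) / 2)) := by
  set n := istar - k
  have hθ : ∀ m ∈ range (n + 1), ρ ^ n / 2 < ρ ^ m := fun m hm => by
    have := pow_le_pow_of_le_one hρ0.le hρ1.le (Nat.lt_succ_iff.mp (mem_range.mp hm))
    linarith [pow_pos hρ0 n]
  have hchernoff := hindep.measureReal_sum_ge_le_of_hasLaw_expMeasure hmeas
    (fun m _ => hasLaw_expMeasure_of_cdf (hmeas m) (pow_pos hρ0 m) (hcdf m))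
    (fun m _ => pow_pos hρ0 m) (by positivity) hθ s
  rw [prod_range_succ_div_sub_half_pow hρ0.ne'] at hchernoff
  have hprod := hC₂ ▸ prod_range_inv_one_sub_half_pow_le_tprod hρ0.le hρ1 (n + 1)
  have hexp : exp (-(ρ ^ n / 2) * s) ≤ exp (-(ρ ^ (1 - (k : ℝ))) / 2) := by
    have := rpow_one_sub_le_pow_sub_mul hρ0 (n := istar) (k := k) (by omega) (by omega)
      (by simpa [histar] using one_le_pow_floor_log_div_log_inv_mul hρ0 hρ1 hs)
    rw [exp_le_exp]
    linarith
  calc μ {ω | s < S (n + 1) ω} ≤ μ {ω | s ≤ ∑ m ∈ range (n + 1), E m ω} :=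
        measure_mono fun ω hω => (hS (n + 1) ω ▸ hω.out).le
    _ = ENNReal.ofReal (μ.real {ω | s ≤ ∑ m ∈ range (n + 1), E m ω}) :=
        (ofReal_measureReal (measure_ne_top μ _)).symm
    _ ≤ ENNReal.ofReal (C₂ * exp (-(ρ ^ (1 - (k : ℝ))) / 2)) := by
        refine ENNReal.ofReal_le_ofReal (hchernoff.trans ?_)
        rw [mul_comm C₂]
        exact mul_le_mul hexp hprod (prod_nonneg fun m _ =>
          inv_nonneg.mpr (by linarith [pow_le_one₀ (n := m) hρ0.le hρ1.le])) (exp_nonneg _)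

theorem stmt_11 {Ω : Type*} [MeasurableSpace Ω] (μ : Measure Ω) [IsProbabilityMeasure μ]
    (ρ : ℝ) (hρ0 : 0 < ρ) (hρ1 : ρ < 1)
    (E : ℕ → Ω → ℝ)
    (hmeas : ∀ m, Measurable (E m))
    (hindep : ProbabilityTheory.iIndepFun E μ)
    (hcdf : ∀ m, ∀ t : ℝ, 0 ≤ t →
      μ {ω | E m ω ≤ t} = ENNReal.ofReal (1 - Real.exp (-(ρ ^ m) * t)))
    (S : ℕ → Ω → ℝ) (hS : ∀ r ω, S r ω = ∑ m ∈ Finset.range r, E m ω)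
    (s : ℝ) (hs : 1 ≤ s)
    (istar : ℕ) (histar : istar = ⌊Real.log s / Real.log (1 / ρ)⌋₊ + 1)
    (C₂ : ℝ) (hC₂ : C₂ = ∏' m : ℕ, (1 - ρ ^ m / 2)⁻¹)
    (k : ℕ) (hk1 : 1 ≤ k) (hk2 : k ≤ istar - 1) :
    μ {ω | s < S (istar - k + 1) ω} ≤
      ENNReal.ofReal (C₂ * Real.exp (-(ρ ^ (1 - (k : ℝ))) / 2)) :=
  stmt_11_general μ ρ hρ0 hρ1 E hmeas hindep hcdf S hS s hs istar histar C₂ hC₂ k hk2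
end
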